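/- Let (Ω, ℱ, ℙ) be a probability space, K ⊆ ℝ^m nonempty, closed and convex, and F : Ω × ℝ^m → ℝ^m a map such that ω ↦ F(ω, u) is measurable for each u ∈ ℝ^m, F(·, u₀) ∈ L²(ℙ; ℝ^m) for some u₀ ∈ ℝ^m, and there exist constants 0 < C ≤ L such that for almost every ω ∈ Ω: ‖F(ω, u₁) − F(ω, u₂)‖ ≤ L ‖u₁ − u₂‖ and ⟨F(ω, u₁) − F(ω, u₂), u₁ − u₂⟩ ≥ C ‖u₁ − u₂‖² for all u₁, u₂ ∈ ℝ^m. Then there exists a unique u ∈ L²(ℙ; ℝ^m) such that u(ω) ∈ K almost surely and, for almost every ω ∈ Ω, ⟨F(ω, u(ω)), v − u(ω)⟩ ≥ 0 for all v ∈ K. -/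

import Mathlib

open MeasureTheory
open scoped RealInnerProductSpace

/-!
Let `P_K` be the nearest-point projection onto `K` and `ρ = C / L²`. For almost every `ω` the map
`x ↦ P_K (x - ρ • F ω x)` is a contraction of ratio `√(1 - (C / L)²)`, and a fixed point of it
solves the variational inequality for `F ω`. Since `F` is Carathéodory (measurable in `ω`, a.s.
continuous in `x`), the Picard iterates from a constant are a.e. measurable in `ω`, so their a.e.
limit is a measurable solution. Strong monotonicity tested against a point `w ∈ K` gives
`C ‖u ω - w‖ ≤ ‖F ω w‖`, which puts `u` in `L²`, and tested against a second solution it gives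
pointwise uniqueness.
-/

open Filter Function TopologicalSpace

section Caratheodory

variable {Ω X Y : Type*} [MeasurableSpace Ω] {μ : Measure Ω}
  [TopologicalSpace X] [MetrizableSpace X] [SecondCountableTopology X] [MeasurableSpace X]
  [OpensMeasurableSpace X] [TopologicalSpace Y] [PseudoMetrizableSpace Y] [MeasurableSpace Y]
  [BorelSpace Y] [Nonempty Y]

theorem AEMeasurable.apply_of_measurable_of_ae_continuous {Φ : Ω → X → Y} {g : Ω → X}
    (hΦ : ∀ x, Measurable fun ω => Φ ω x) (hΦc : ∀ᵐ ω ∂μ, Continuous (Φ ω))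
    (hg : AEMeasurable g μ) :
    AEMeasurable (fun ω => Φ ω (g ω)) μ := by
  classical
  -- Replace `Φ` by a constant on a measurable null set containing its discontinuities,
  -- so that it becomes jointly measurable.
  set t := toMeasurable μ {ω | ¬Continuous (Φ ω)}
  have ht : ∀ᵐ ω ∂μ, ω ∉ t := measure_eq_zero_iff_ae_notMem.1 <| by
    rw [measure_toMeasurable]; exact ae_iff.1 hΦc
  let Ψ : X → Ω → Y := fun x ω => if ω ∈ t then Classical.arbitrary Y else Φ ω x
  have hΨ : Measurable (uncurry Ψ) := by
    refine measurable_uncurry_of_continuous_of_measurable (fun ω => ?_)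
      fun x => Measurable.ite (measurableSet_toMeasurable _ _) measurable_const (hΦ x)
    by_cases hω : ω ∈ t
    · simpa only [Ψ, hω, if_true] using continuous_const
    · have : Continuous (Φ ω) := not_not.1 fun h => hω (subset_toMeasurable μ _ h)
      simpa only [Ψ, hω, if_false] using this
  refine (hΨ.comp (hg.measurable_mk.prodMk measurable_id)).aemeasurable.congr ?_
  filter_upwards [hg.ae_eq_mk, ht] with ω hgω hω
  simp [Ψ, hω, hgω]

end Caratheodory

section RandomContraction

variable {Ω X : Type*} [MeasurableSpace Ω] {μ : Measure Ω} [MetricSpace X]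
  [SecondCountableTopology X] [MeasurableSpace X] [BorelSpace X] [Nonempty X]

theorem aemeasurable_iterate_apply_of_ae_continuous {T : Ω → X → X}
    (hT : ∀ x, Measurable fun ω => T ω x) (hTc : ∀ᵐ ω ∂μ, Continuous (T ω)) (x₀ : X) (n : ℕ) :
    AEMeasurable (fun ω => (T ω)^[n] x₀) μ := by
  induction n with
  | zero => exact aemeasurable_const
  | succ n ih =>
    simp only [iterate_succ_apply']
    exact ih.apply_of_measurable_of_ae_continuous hT hTc

theorem exists_measurable_ae_isFixedPt_of_ae_contractingWith [CompleteSpace X] {T : Ω → X → X}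
    (hT : ∀ x, Measurable fun ω => T ω x) (hTc : ∀ᵐ ω ∂μ, ∃ k, ContractingWith k (T ω)) :
    ∃ u : Ω → X, Measurable u ∧ ∀ᵐ ω ∂μ, IsFixedPt (T ω) (u ω) := by
  obtain ⟨x₀⟩ := ‹Nonempty X›
  have hcont : ∀ᵐ ω ∂μ, Continuous (T ω) :=
    hTc.mono fun _ ⟨_, hk⟩ => hk.toLipschitzWith.continuous
  obtain ⟨u, hu, hlim⟩ := measurable_limit_of_tendsto_metrizable_ae (L := atTop)
    (aemeasurable_iterate_apply_of_ae_continuous hT hcont x₀) <|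
    hTc.mono fun _ ⟨_, hk⟩ => ⟨_, hk.tendsto_iterate_fixedPoint x₀⟩
  refine ⟨u, hu, ?_⟩
  filter_upwards [hlim, hcont] with ω hω hωc
  exact isFixedPt_of_tendsto_iterate hω hωc.continuousAt

end RandomContraction

section VariationalInequality

variable {E : Type*} [NormedAddCommGroup E] [InnerProductSpace ℝ E]

def IsVISolution (K : Set E) (G : E → E) (x : E) : Prop :=
  x ∈ K ∧ ∀ v ∈ K, 0 ≤ ⟪G x, v - x⟫

variable {K : Set E} {G : E → E} {C L : ℝ} {x y : E}

theorem IsVISolution.mul_sq_norm_sub_le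
    (hG : ∀ x y, C * ‖x - y‖ ^ 2 ≤ ⟪G x - G y, x - y⟫) (hx : IsVISolution K G x) (hy : y ∈ K) :
    C * ‖x - y‖ ^ 2 ≤ ⟪G y, y - x⟫ := by
  have hxy := hx.2 y hy
  have hsplit : ⟪G x - G y, x - y⟫ = -⟪G x, y - x⟫ + ⟪G y, y - x⟫ := by
    rw [← neg_sub y x]
    simp only [inner_sub_left, inner_neg_right]
    ring
  linarith [hG x y]

theorem IsVISolution.unique (hG : ∀ x y, C * ‖x - y‖ ^ 2 ≤ ⟪G x - G y, x - y⟫) (hC : 0 < C)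
    (hx : IsVISolution K G x) (hy : IsVISolution K G y) : x = y := by
  have h := hx.mul_sq_norm_sub_le hG hy.1
  rw [← neg_sub x y, inner_neg_right] at h
  have hyx := hy.2 x hx.1
  have : ‖x - y‖ ^ 2 = 0 := by nlinarith [sq_nonneg ‖x - y‖]
  simpa [sub_eq_zero] using this

theorem IsVISolution.norm_sub_le (hG : ∀ x y, C * ‖x - y‖ ^ 2 ≤ ⟪G x - G y, x - y⟫)
    (hC : 0 < C) (hx : IsVISolution K G x) (hy : y ∈ K) : ‖x - y‖ ≤ ‖G y‖ / C := by
  have h := hx.mul_sq_norm_sub_le hG hy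
  have hcs : ⟪G y, y - x⟫ ≤ ‖G y‖ * ‖x - y‖ := by
    simpa only [norm_sub_rev] using real_inner_le_norm (G y) (y - x)
  rw [le_div_iff₀ hC]
  nlinarith [norm_nonneg (x - y), norm_nonneg (G y)]

end VariationalInequality

section ConvexProjection

variable {E : Type*} [NormedAddCommGroup E] [InnerProductSpace ℝ E] {K : Set E}

open Classical in
/-- A nearest point of `K` to `x`, given by its variational characterisation, with the junk
value `x` when there is none. -/
noncomputable def convexProj (K : Set E) (x : E) : E :=
  if h : ∃ w ∈ K, ∀ v ∈ K, ⟪x - w, v - w⟫ ≤ 0 then h.choose else x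

variable (hne : K.Nonempty) (hK : IsComplete K) (hcv : Convex ℝ K)
include hne hK hcv

theorem convexProj_spec (x : E) :
    convexProj K x ∈ K ∧ ∀ v ∈ K, ⟪x - convexProj K x, v - convexProj K x⟫ ≤ 0 := by
  have h : ∃ w ∈ K, ∀ v ∈ K, ⟪x - w, v - w⟫ ≤ 0 := by
    obtain ⟨w, hwK, hw⟩ := exists_norm_eq_iInf_of_complete_convex hne hK hcv x
    exact ⟨w, hwK, (norm_eq_iInf_iff_real_inner_le_zero hcv hwK).1 hw⟩
  rw [convexProj, dif_pos h]
  exact h.choose_spec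

theorem lipschitzWith_one_convexProj : LipschitzWith 1 (convexProj K) := by
  refine LipschitzWith.of_dist_le_mul fun x y => ?_
  rw [NNReal.coe_one, one_mul, dist_eq_norm, dist_eq_norm]
  obtain ⟨hpx, hx⟩ := convexProj_spec hne hK hcv x
  obtain ⟨hpy, hy⟩ := convexProj_spec hne hK hcv y
  set p := convexProj K x
  set q := convexProj K y
  have hfirm : ‖p - q‖ ^ 2 ≤ ⟪x - y, p - q⟫ := by
    have hsplit : ⟪x - y, p - q⟫ - ‖p - q‖ ^ 2 = -⟪x - p, q - p⟫ - ⟪y - q, p - q⟫ := by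
      rw [← real_inner_self_eq_norm_sq]
      simp only [inner_sub_left, inner_sub_right]
      ring
    linarith [hx q hpy, hy p hpx]
  nlinarith [real_inner_le_norm (x - y) (p - q), norm_nonneg (p - q), norm_nonneg (x - y)]

theorem isVISolution_of_convexProj_eq {G : E → E} {ρ : ℝ} {x : E} (hρ : 0 < ρ)
    (h : convexProj K (x - ρ • G x) = x) : IsVISolution K G x := by
  obtain ⟨hmem, hvar⟩ := convexProj_spec hne hK hcv (x - ρ • G x)
  rw [h] at hmem hvar
  refine ⟨hmem, fun v hv => ?_⟩
  have := hvar v hv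
  rw [sub_sub_cancel_left, inner_neg_left, real_inner_smul_left] at this
  nlinarith

end ConvexProjection

section Contraction

variable {E : Type*} [NormedAddCommGroup E] [InnerProductSpace ℝ E] {G : E → E} {C L : ℝ}

theorem norm_sub_smul_sub_sq_le (hGL : ∀ x y, ‖G x - G y‖ ≤ L * ‖x - y‖)
    (hG : ∀ x y, C * ‖x - y‖ ^ 2 ≤ ⟪G x - G y, x - y⟫) {ρ : ℝ} (hρ : 0 ≤ ρ) (x y : E) :
    ‖(x - ρ • G x) - (y - ρ • G y)‖ ^ 2 ≤ (1 - 2 * ρ * C + ρ ^ 2 * L ^ 2) * ‖x - y‖ ^ 2 := by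
  have hGL2 : ‖G x - G y‖ ^ 2 ≤ (L * ‖x - y‖) ^ 2 :=
    pow_le_pow_left₀ (norm_nonneg _) (hGL x y) 2
  have hexp : (x - ρ • G x) - (y - ρ • G y) = (x - y) - ρ • (G x - G y) := by
    rw [smul_sub]; abel
  rw [hexp, norm_sub_sq_real, real_inner_smul_right, norm_smul, Real.norm_eq_abs,
    abs_of_nonneg hρ, real_inner_comm]
  nlinarith [hG x y, mul_le_mul_of_nonneg_left hGL2 (sq_nonneg ρ)]

theorem contractingWith_sub_smul (hGL : ∀ x y, ‖G x - G y‖ ≤ L * ‖x - y‖)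
    (hG : ∀ x y, C * ‖x - y‖ ^ 2 ≤ ⟪G x - G y, x - y⟫) (hC : 0 < C) (hCL : C ≤ L) :
    ContractingWith (NNReal.sqrt (1 - (C / L) ^ 2).toNNReal) fun x => x - (C / L ^ 2) • G x := by
  have hL : 0 < L := hC.trans_le hCL
  have hq : 0 ≤ 1 - (C / L) ^ 2 := by
    have : C / L ≤ 1 := (div_le_one hL).2 hCL
    nlinarith [div_pos hC hL]
  constructor
  · rw [← NNReal.coe_lt_coe, Real.coe_sqrt, Real.coe_toNNReal _ hq, NNReal.coe_one,
      Real.sqrt_lt' one_pos]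
    have := div_pos hC hL
    nlinarith
  · refine LipschitzWith.of_dist_le_mul fun x y => ?_
    rw [dist_eq_norm, dist_eq_norm, Real.coe_sqrt, Real.coe_toNNReal _ hq]
    have hsq := norm_sub_smul_sub_sq_le hGL hG (ρ := C / L ^ 2) (by positivity) x y
    have hρ : 1 - 2 * (C / L ^ 2) * C + (C / L ^ 2) ^ 2 * L ^ 2 = 1 - (C / L) ^ 2 := by
      field_simp; ring
    rw [hρ] at hsq
    calc ‖x - (C / L ^ 2) • G x - (y - (C / L ^ 2) • G y)‖
        ≤ √((1 - (C / L) ^ 2) * ‖x - y‖ ^ 2) := (le_abs_self _).trans (Real.abs_le_sqrt hsq)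
      _ = √(1 - (C / L) ^ 2) * ‖x - y‖ := by rw [Real.sqrt_mul hq, Real.sqrt_sq (norm_nonneg _)]

theorem contractingWith_convexProj_sub_smul {K : Set E} (hne : K.Nonempty) (hK : IsComplete K)
    (hcv : Convex ℝ K) (hGL : ∀ x y, ‖G x - G y‖ ≤ L * ‖x - y‖)
    (hG : ∀ x y, C * ‖x - y‖ ^ 2 ≤ ⟪G x - G y, x - y⟫) (hC : 0 < C) (hCL : C ≤ L) :
    ContractingWith (NNReal.sqrt (1 - (C / L) ^ 2).toNNReal)
      fun x => convexProj K (x - (C / L ^ 2) • G x) := by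
  have h := contractingWith_sub_smul hGL hG hC hCL
  exact ⟨h.1, ((lipschitzWith_one_convexProj hne hK hcv).comp h.2).weaken (one_mul _).le⟩

end Contraction

theorem memLp_of_ae_isVISolution {Ω E : Type*} [MeasurableSpace Ω] {μ : Measure Ω}
    [IsFiniteMeasure μ] [NormedAddCommGroup E] [InnerProductSpace ℝ E] {p : ENNReal}
    {K : Set E} {F : Ω → E → E} {u : Ω → E} {C L : ℝ} {w₀ u₀ : E}
    (hu : AEStronglyMeasurable u μ) (hFu₀ : MemLp (fun ω => F ω u₀) p μ) (hw₀ : w₀ ∈ K)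
    (hLip : ∀ᵐ ω ∂μ, ∀ x y, ‖F ω x - F ω y‖ ≤ L * ‖x - y‖)
    (hmono : ∀ᵐ ω ∂μ, ∀ x y, C * ‖x - y‖ ^ 2 ≤ ⟪F ω x - F ω y, x - y⟫) (hC : 0 < C)
    (hVI : ∀ᵐ ω ∂μ, IsVISolution K (F ω) (u ω)) : MemLp u p μ := by
  refine ((memLp_const (‖w₀‖ + L * ‖w₀ - u₀‖ / C)).add (hFu₀.norm.const_mul C⁻¹)).of_le hu ?_
  filter_upwards [hLip, hmono, hVI] with ω hl hm hω
  have hF : ‖F ω w₀‖ ≤ L * ‖w₀ - u₀‖ + ‖F ω u₀‖ :=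
    (norm_le_norm_sub_add _ _).trans (add_le_add_left (hl w₀ u₀) _)
  calc ‖u ω‖ ≤ ‖w₀‖ + ‖u ω - w₀‖ := norm_le_norm_add_norm_sub' _ _
    _ ≤ ‖w₀‖ + ‖F ω w₀‖ / C := by gcongr; exact hω.norm_sub_le hm hC hw₀
    _ ≤ ‖w₀‖ + (L * ‖w₀ - u₀‖ + ‖F ω u₀‖) / C := by gcongr
    _ = ‖w₀‖ + L * ‖w₀ - u₀‖ / C + C⁻¹ * ‖F ω u₀‖ := by ring
    _ ≤ _ := le_abs_self _

/-- Existence and a.s. uniqueness for a random variational inequality: for a probability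
space `(Ω, ℱ, ℙ)`, `K ⊆ ℝ^m` nonempty closed convex, and `F : Ω × ℝ^m → ℝ^m` measurable
in `ω`, square-integrable at some `u₀`, and (a.s.) `L`-Lipschitz and `C`-strongly
monotone in `u` with `0 < C ≤ L`, there is a unique (up to a.s. equality)
`u ∈ L²(ℙ; ℝ^m)` with `u(ω) ∈ K` a.s. and `⟨F(ω, u(ω)), v − u(ω)⟩ ≥ 0` for all `v ∈ K`
for a.e. `ω`. -/
theorem stmt_8 {m : ℕ} {Ω : Type*} [MeasurableSpace Ω] (ℙ : Measure Ω)
    [IsProbabilityMeasure ℙ]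
    (K : Set (EuclideanSpace ℝ (Fin m)))
    (hKne : K.Nonempty) (hKcl : IsClosed K) (hKcv : Convex ℝ K)
    (F : Ω → EuclideanSpace ℝ (Fin m) → EuclideanSpace ℝ (Fin m))
    (hFmeas : ∀ u : EuclideanSpace ℝ (Fin m), Measurable fun ω => F ω u)
    (u₀ : EuclideanSpace ℝ (Fin m)) (hFu₀ : MemLp (fun ω => F ω u₀) 2 ℙ)
    (L C : ℝ) (hC : 0 < C) (hCL : C ≤ L)
    (hLip : ∀ᵐ ω ∂ℙ, ∀ u₁ u₂ : EuclideanSpace ℝ (Fin m),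
      ‖F ω u₁ - F ω u₂‖ ≤ L * ‖u₁ - u₂‖)
    (hmono : ∀ᵐ ω ∂ℙ, ∀ u₁ u₂ : EuclideanSpace ℝ (Fin m),
      C * ‖u₁ - u₂‖ ^ 2 ≤ ⟪F ω u₁ - F ω u₂, u₁ - u₂⟫) :
    ∃ u : Ω → EuclideanSpace ℝ (Fin m),
      MemLp u 2 ℙ ∧ (∀ᵐ ω ∂ℙ, u ω ∈ K) ∧
      (∀ᵐ ω ∂ℙ, ∀ v ∈ K, 0 ≤ ⟪F ω (u ω), v - u ω⟫) ∧
      ∀ u' : Ω → EuclideanSpace ℝ (Fin m),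
        MemLp u' 2 ℙ → (∀ᵐ ω ∂ℙ, u' ω ∈ K) →
        (∀ᵐ ω ∂ℙ, ∀ v ∈ K, 0 ≤ ⟪F ω (u' ω), v - u' ω⟫) → u' =ᵐ[ℙ] u := by
  have hK := hKcl.isComplete
  have hT : ∀ x, Measurable fun ω => convexProj K (x - (C / L ^ 2) • F ω x) := fun x =>
    (lipschitzWith_one_convexProj hKne hK hKcv).continuous.measurable.comp
      (measurable_const.sub ((hFmeas x).const_smul (C / L ^ 2)))
  obtain ⟨u, hu, hfix⟩ := exists_measurable_ae_isFixedPt_of_ae_contractingWith hT <| by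
    filter_upwards [hLip, hmono] with ω hl hm
    exact ⟨_, contractingWith_convexProj_sub_smul hKne hK hKcv hl hm hC hCL⟩
  have hVI : ∀ᵐ ω ∂ℙ, IsVISolution K (F ω) (u ω) := by
    filter_upwards [hfix] with ω hω
    exact isVISolution_of_convexProj_eq hKne hK hKcv
      (div_pos hC (pow_pos (hC.trans_le hCL) 2)) hω
  obtain ⟨w₀, hw₀⟩ := hKne
  refine ⟨u, memLp_of_ae_isVISolution hu.aestronglyMeasurable hFu₀ hw₀ hLip hmono hC hVI,
    hVI.mono fun _ h => h.1, hVI.mono fun _ h => h.2, fun u' _ hu'K hu'VI => ?_⟩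
  filter_upwards [hu'K, hu'VI, hVI, hmono] with ω hK' hVI' hω hm
  exact IsVISolution.unique hm hC ⟨hK', hVI'⟩ hω
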